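/- arXiv:1709.05800 — 2 statements merged into one kernel-verified Lean document; each statement's English description precedes it below -/
import Mathlib

section
/- Let Γ be a finite simple graph with a Godsil–McKay partition π = {C₁, …, C_t, D} (with Godsil–McKay cell D), let sw_π Γ be the graph obtained by Godsil–McKay switching, and let Q be the switching matrix with respect to π. Then A(sw_π Γ) = Q A(Γ) Q, where A denotes the adjacency matrix (regarded as a rational matrix). -/
open Classical Matrix Kronecker

/-- The number of neighbors of `x` inside the set `c`. -/
noncomputable def nbrCount {V : Type*} (G : SimpleGraph V) (x : V) (c : Finset V) : ℕ :=
  (c.filter fun y => G.Adj x y).card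

/-- `{C i} ∪ {D}` is a partition of the vertex set (all cells nonempty, pairwise
disjoint, covering). -/
def IsPartitionWithCell {V ι : Type*} (C : ι → Finset V) (D : Finset V) : Prop :=
  (∀ i, (C i).Nonempty) ∧ D.Nonempty ∧
    Pairwise (fun i j => Disjoint (C i) (C j)) ∧
    (∀ i, Disjoint (C i) D) ∧ ∀ x : V, x ∈ D ∨ ∃ i, x ∈ C i

/-- The family of cells `C` is equitable for `G` : any two vertices of a cell `C i`
have the same number of neighbors in each cell `C j`. -/
def IsEquitableOn {V ι : Type*} (G : SimpleGraph V) (C : ι → Finset V) : Prop :=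
  ∀ i j, ∀ x ∈ C i, ∀ y ∈ C i, nbrCount G x (C j) = nbrCount G y (C j)

/-- Every vertex of `D` has `0`, `|C i|/2` or `|C i|` neighbors in each cell `C i`. -/
def GMhalf {V ι : Type*} (G : SimpleGraph V) (C : ι → Finset V) (D : Finset V) : Prop :=
  ∀ x ∈ D, ∀ i, nbrCount G x (C i) = 0 ∨ 2 * nbrCount G x (C i) = (C i).card ∨
    nbrCount G x (C i) = (C i).card

/-- `π = {C₁, …, C_t, D}` is a Godsil–McKay partition of `G` with Godsil–McKay cell `D`. -/
def IsGMPartition {V ι : Type*} (G : SimpleGraph V) (C : ι → Finset V) (D : Finset V) : Prop :=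
  IsPartitionWithCell C D ∧ IsEquitableOn G C ∧ GMhalf G C D

/-- The graph obtained from `G` by Godsil–McKay switching with respect to the
partition `{C₁, …, C_t, D}` : adjacency and nonadjacency between `x ∈ D` and the
vertices of `C i` are interchanged whenever `x` has exactly `|C i|/2` neighbors in `C i`. -/
def GMswitch {V ι : Type*} (G : SimpleGraph V) (C : ι → Finset V) (D : Finset V) :
    SimpleGraph V where
  Adj x y := x ≠ y ∧ Xor' (G.Adj x y)
    (∃ i, (x ∈ D ∧ y ∈ C i ∧ 2 * nbrCount G x (C i) = (C i).card) ∨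
          (y ∈ D ∧ x ∈ C i ∧ 2 * nbrCount G y (C i) = (C i).card))
  symm := by
    constructor
    rintro x y ⟨hne, h⟩
    refine ⟨hne.symm, ?_⟩
    have h1 : (G.Adj y x) = (G.Adj x y) := propext (G.adj_comm y x)
    have h2 : (∃ i, (y ∈ D ∧ x ∈ C i ∧ 2 * nbrCount G y (C i) = (C i).card) ∨
          (x ∈ D ∧ y ∈ C i ∧ 2 * nbrCount G x (C i) = (C i).card)) =
        (∃ i, (x ∈ D ∧ y ∈ C i ∧ 2 * nbrCount G x (C i) = (C i).card) ∨
          (y ∈ D ∧ x ∈ C i ∧ 2 * nbrCount G y (C i) = (C i).card)) :=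
      propext (exists_congr fun i => or_comm)
    rw [h1, h2]
    exact h
  loopless := by constructor; rintro x ⟨hne, -⟩; exact hne rfl

/-- The adjacency matrix of a graph, with rational entries. -/
noncomputable def adjM {V : Type*} (G : SimpleGraph V) : Matrix V V ℚ :=
  Matrix.of fun x y => if G.Adj x y then 1 else 0

/-- The all-one matrix. -/
def allOnes (V : Type*) : Matrix V V ℚ := Matrix.of fun _ _ => 1

/-- The switching matrix `Q` of the partition `{C₁, …, C_t, D}` :
`Q x y = 2/|C i| - δ_{x y}` if `x, y ∈ C i`, `Q x y = δ_{x y}` if `x, y ∈ D`,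
and `Q x y = 0` otherwise. -/
noncomputable def switchMatrix {V ι : Type*} (C : ι → Finset V) (D : Finset V) :
    Matrix V V ℚ :=
  Matrix.of fun x y =>
    if h : ∃ i, x ∈ C i ∧ y ∈ C i then
      2 / ((C h.choose).card : ℚ) - (if x = y then 1 else 0)
    else if x ∈ D ∧ y ∈ D then (if x = y then 1 else 0) else 0

/-- The characteristic matrix of a family of cells: `S x i = 1` iff `x ∈ C i`. -/
noncomputable def charMat {V ι : Type*} (C : ι → Finset V) : Matrix V ι ℚ :=
  Matrix.of fun x i => if x ∈ C i then 1 else 0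

/-- `A₀ = I`, `A₁ = A(G)`, `A₂ = J - I - A(G)`. -/
noncomputable def stdMats {V : Type*} [DecidableEq V] (G : SimpleGraph V) :
    Fin 3 → Matrix V V ℚ :=
  ![1, adjM G, allOnes V - 1 - adjM G]

/-- The three basic relations: `i = 0` : equality, `i = 1` : adjacency,
`i = 2` : distinct nonadjacency. -/
def relOfIdx {V : Type*} (G : SimpleGraph V) (i : Fin 3) (x y : V) : Prop :=
  (i = 0 ∧ x = y) ∨ (i = 1 ∧ G.Adj x y) ∨ (i = 2 ∧ x ≠ y ∧ ¬ G.Adj x y)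

lemma relOfIdx_symm {V : Type*} {G : SimpleGraph V} {i : Fin 3} {x y : V}
    (h : relOfIdx G i x y) : relOfIdx G i y x := by
  rcases h with ⟨hi, h⟩ | ⟨hi, h⟩ | ⟨hi, h1, h2⟩
  · exact Or.inl ⟨hi, h.symm⟩
  · exact Or.inr (Or.inl ⟨hi, h.symm⟩)
  · exact Or.inr (Or.inr ⟨hi, h1.symm, fun hadj => h2 hadj.symm⟩)

/-- The unified graph product of type `[0 s₀₁ s₀₂; s₁₀ s₁₁ s₁₂; s₂₀ s₂₁ s₂₂]` :
the graph on `V × W` whose adjacency matrix is `Σ_{i,j} s i j • (A_i ⊗ B_j)`. -/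
def unifiedProd {V W : Type*} (G : SimpleGraph V) (H : SimpleGraph W)
    (s : Fin 3 → Fin 3 → ℚ) : SimpleGraph (V × W) where
  Adj p q := p ≠ q ∧ ∃ i j, s i j = 1 ∧ relOfIdx G i p.1 q.1 ∧ relOfIdx H j p.2 q.2
  symm := by
    constructor
    rintro p q ⟨hne, i, j, hs, hi, hj⟩
    exact ⟨hne.symm, i, j, hs, relOfIdx_symm hi, relOfIdx_symm hj⟩
  loopless := by constructor; rintro p ⟨hne, -⟩; exact hne rfl

/-!
The switching matrix is block diagonal: the identity on `D` and `(2/|C i|) J - I` on `C i`.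
Conjugating `A(Γ)` by it leaves the `D × D` block alone. On a block `C i × C j` the
equitability of the cells, together with the double count
`|C j| · nbrCount y (C i) = |C i| · nbrCount x (C j)` of the edges between them, makes all the
`J`-terms cancel. For `x ∈ D` and `y ∈ C j` the entry becomes `(2/|C j|) · nbrCount x (C j) - A x y`,
which is `A x y` when `x` has `0` or `|C j|` neighbours in `C j`, and `1 - A x y` when it has
`|C j|/2` of them: exactly the switching rule.
-/

section GodsilMcKay

variable {V ι : Type*} {C : ι → Finset V} {D : Finset V}

lemma index_eq_of_mem_of_mem (hC : Pairwise fun i j => Disjoint (C i) (C j)) {i j : ι} {x : V}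
    (hi : x ∈ C i) (hj : x ∈ C j) : i = j :=
  hC.eq (Finset.not_disjoint_iff.mpr ⟨x, hi, hj⟩)

lemma switchMatrix_apply_of_mem_cell (hC : Pairwise fun i j => Disjoint (C i) (C j))
    (hCD : ∀ i, Disjoint (C i) D) {i : ι} {x : V} (hx : x ∈ C i) (z : V) :
    switchMatrix C D x z =
      (if z ∈ C i then 2 / ((C i).card : ℚ) else 0) - if x = z then 1 else 0 := by
  have hcell : (∃ j, x ∈ C j ∧ z ∈ C j) ↔ z ∈ C i :=
    ⟨fun ⟨j, hxj, hzj⟩ => index_eq_of_mem_of_mem hC hxj hx ▸ hzj, fun hz => ⟨i, hx, hz⟩⟩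
  by_cases hz : z ∈ C i
  · have h := hcell.mpr hz
    rw [switchMatrix, of_apply, dif_pos h, index_eq_of_mem_of_mem hC h.choose_spec.1 hx,
      if_pos hz]
  · have hxz : x ≠ z := by rintro rfl; exact hz hx
    simp [switchMatrix, hcell, hz, hxz, Finset.disjoint_left.mp (hCD i) hx]

lemma switchMatrix_apply_of_mem_D (hCD : ∀ i, Disjoint (C i) D) {x : V} (hx : x ∈ D) (z : V) :
    switchMatrix C D x z = if x = z then 1 else 0 := by
  have hcell : ¬ ∃ j, x ∈ C j ∧ z ∈ C j :=
    fun ⟨j, hxj, _⟩ => Finset.disjoint_left.mp (hCD j) hxj hx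
  by_cases hz : z ∈ D
  · simp [switchMatrix, hcell, hx, hz]
  · have hxz : x ≠ z := by rintro rfl; exact hz hx
    simp [switchMatrix, hcell, hz, hxz]

lemma switchMatrix_transpose (hC : Pairwise fun i j => Disjoint (C i) (C j)) :
    (switchMatrix C D)ᵀ = switchMatrix C D := by
  ext x y
  rcases eq_or_ne x y with rfl | hxy
  · rfl
  have hswap : (∃ i, y ∈ C i ∧ x ∈ C i) ↔ ∃ i, x ∈ C i ∧ y ∈ C i :=
    exists_congr fun _ => and_comm
  simp only [transpose_apply, switchMatrix, of_apply, hxy, hxy.symm, if_false]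
  by_cases h : ∃ i, x ∈ C i ∧ y ∈ C i
  · have h' := hswap.mpr h
    rw [dif_pos h, dif_pos h', index_eq_of_mem_of_mem hC h'.choose_spec.1 h.choose_spec.2]
  · simp only [dif_neg h, dif_neg (mt hswap.mp h), ite_self]

lemma adjM_comm (G : SimpleGraph V) (x y : V) : adjM G x y = adjM G y x := by
  simp [adjM, G.adj_comm]

lemma adjM_transpose (G : SimpleGraph V) : (adjM G)ᵀ = adjM G := by
  ext x y
  exact adjM_comm G y x

lemma sum_adjM_eq_nbrCount (G : SimpleGraph V) (x : V) (s : Finset V) :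
    ∑ z ∈ s, adjM G z x = nbrCount G x s := by
  simp [adjM, nbrCount, G.adj_comm, Finset.sum_boole]

lemma adjM_eq_zero_of_nbrCount_eq_zero {G : SimpleGraph V} {x y : V} {s : Finset V}
    (h : nbrCount G x s = 0) (hy : y ∈ s) : adjM G x y = 0 := by
  simp [adjM, Finset.card_filter_eq_zero_iff.mp h y hy]

lemma adjM_eq_one_of_nbrCount_eq_card {G : SimpleGraph V} {x y : V} {s : Finset V}
    (h : nbrCount G x s = s.card) (hy : y ∈ s) : adjM G x y = 1 := by
  simp [adjM, Finset.card_filter_eq_iff.mp h y hy]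

/-- Both sides count the edges between `C i` and `C j`. -/
lemma card_mul_nbrCount_comm {G : SimpleGraph V} (hEq : IsEquitableOn G C) {i j : ι}
    {x y : V} (hx : x ∈ C i) (hy : y ∈ C j) :
    (C j).card * nbrCount G y (C i) = (C i).card * nbrCount G x (C j) :=
  calc (C j).card * nbrCount G y (C i) = ∑ w ∈ C j, nbrCount G w (C i) := by
        rw [Finset.sum_congr rfl fun w hw => hEq j i w hw y hy, Finset.sum_const, smul_eq_mul]
    _ = ∑ z ∈ C i, nbrCount G z (C j) := by
        simp only [nbrCount, Finset.card_filter]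
        rw [Finset.sum_comm]
        simp only [G.adj_comm]
    _ = (C i).card * nbrCount G x (C j) := by
        rw [Finset.sum_congr rfl fun z hz => hEq i j z hz x hx, Finset.sum_const, smul_eq_mul]

def IsGMSwitchedPair (G : SimpleGraph V) (C : ι → Finset V) (D : Finset V) (x y : V) : Prop :=
  ∃ i, (x ∈ D ∧ y ∈ C i ∧ 2 * nbrCount G x (C i) = (C i).card) ∨
    (y ∈ D ∧ x ∈ C i ∧ 2 * nbrCount G y (C i) = (C i).card)

lemma GMswitch_adj_iff {G : SimpleGraph V} {x y : V} :
    (GMswitch G C D).Adj x y ↔ x ≠ y ∧ (G.Adj x y ↔ ¬ IsGMSwitchedPair G C D x y) :=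
  and_congr_right fun _ => xor_iff_iff_not

lemma adjM_GMswitch_of_not_isGMSwitchedPair {G : SimpleGraph V} {x y : V}
    (h : ¬ IsGMSwitchedPair G C D x y) : adjM (GMswitch G C D) x y = adjM G x y := by
  have hadj : (GMswitch G C D).Adj x y ↔ G.Adj x y := by
    simp only [GMswitch_adj_iff, h, not_false_eq_true, iff_true]
    exact and_iff_right_of_imp G.ne_of_adj
  simp only [adjM, of_apply, hadj]

lemma adjM_GMswitch_of_isGMSwitchedPair {G : SimpleGraph V} {x y : V} (hxy : x ≠ y)
    (h : IsGMSwitchedPair G C D x y) : adjM (GMswitch G C D) x y = 1 - adjM G x y := by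
  have hadj : (GMswitch G C D).Adj x y ↔ ¬ G.Adj x y := by
    simp only [GMswitch_adj_iff, h, not_true_eq_false, iff_false, ne_eq, hxy,
      not_false_eq_true, true_and]
  by_cases hG : G.Adj x y <;> simp [adjM, hadj, hG]

lemma not_isGMSwitchedPair_of_mem_D_iff (hCD : ∀ i, Disjoint (C i) D) (G : SimpleGraph V)
    {x y : V} (h : x ∈ D ↔ y ∈ D) : ¬ IsGMSwitchedPair G C D x y := by
  rintro ⟨i, ⟨hx, hy, -⟩ | ⟨hy, hx, -⟩⟩
  · exact Finset.disjoint_left.mp (hCD i) hy (h.mp hx)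
  · exact Finset.disjoint_left.mp (hCD i) hx (h.mpr hy)

lemma isGMSwitchedPair_iff_of_mem_D_of_mem_cell (hC : Pairwise fun i j => Disjoint (C i) (C j))
    (hCD : ∀ i, Disjoint (C i) D) (G : SimpleGraph V) {j : ι} {x y : V} (hx : x ∈ D)
    (hy : y ∈ C j) :
    IsGMSwitchedPair G C D x y ↔ 2 * nbrCount G x (C j) = (C j).card := by
  constructor
  · rintro ⟨i, ⟨-, hyi, h⟩ | ⟨hyD, -, -⟩⟩
    · rwa [index_eq_of_mem_of_mem hC hyi hy] at h
    · exact absurd hyD (Finset.disjoint_left.mp (hCD j) hy)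
  · exact fun h => ⟨j, Or.inl ⟨hx, hy, h⟩⟩

variable [Fintype V]

lemma switchMatrix_mul_apply_of_mem_D (hCD : ∀ i, Disjoint (C i) D) (M : Matrix V V ℚ) {x : V}
    (hx : x ∈ D) (y : V) : (switchMatrix C D * M) x y = M x y := by
  simp [mul_apply, switchMatrix_apply_of_mem_D hCD hx, ite_mul]

lemma switchMatrix_mul_apply_of_mem_cell (hC : Pairwise fun i j => Disjoint (C i) (C j))
    (hCD : ∀ i, Disjoint (C i) D) (M : Matrix V V ℚ) {i : ι} {x : V} (hx : x ∈ C i) (y : V) :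
    (switchMatrix C D * M) x y = 2 / ((C i).card : ℚ) * ∑ z ∈ C i, M z y - M x y := by
  simp only [mul_apply, switchMatrix_apply_of_mem_cell hC hCD hx, sub_mul, ite_mul, zero_mul,
    one_mul]
  rw [Finset.sum_sub_distrib, Finset.sum_ite_mem, Finset.univ_inter, Finset.sum_ite_eq,
    if_pos (Finset.mem_univ x), Finset.mul_sum]

lemma mul_switchMatrix_apply (hC : Pairwise fun i j => Disjoint (C i) (C j))
    (M : Matrix V V ℚ) (x y : V) :
    (M * switchMatrix C D) x y = (switchMatrix C D * Mᵀ) y x := by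
  rw [← transpose_apply (M * _), transpose_mul, switchMatrix_transpose hC]

lemma switchMatrix_conj_transpose (hC : Pairwise fun i j => Disjoint (C i) (C j))
    (M : Matrix V V ℚ) :
    (switchMatrix C D * M * switchMatrix C D)ᵀ = switchMatrix C D * Mᵀ * switchMatrix C D := by
  rw [transpose_mul, transpose_mul, switchMatrix_transpose hC, Matrix.mul_assoc]

lemma mul_switchMatrix_apply_of_mem_D (hC : Pairwise fun i j => Disjoint (C i) (C j))
    (hCD : ∀ i, Disjoint (C i) D) (M : Matrix V V ℚ) {y : V} (hy : y ∈ D) (x : V) :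
    (M * switchMatrix C D) x y = M x y := by
  rw [mul_switchMatrix_apply hC, switchMatrix_mul_apply_of_mem_D hCD _ hy, transpose_apply]

lemma switchMatrix_conj_apply_of_mem_D (hC : Pairwise fun i j => Disjoint (C i) (C j))
    (hCD : ∀ i, Disjoint (C i) D) (M : Matrix V V ℚ) {x y : V} (hx : x ∈ D) (hy : y ∈ D) :
    (switchMatrix C D * M * switchMatrix C D) x y = M x y := by
  rw [Matrix.mul_assoc, switchMatrix_mul_apply_of_mem_D hCD _ hx,
    mul_switchMatrix_apply_of_mem_D hC hCD _ hy]

lemma adjM_mul_switchMatrix_apply_of_mem_cell (hC : Pairwise fun i j => Disjoint (C i) (C j))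
    (hCD : ∀ i, Disjoint (C i) D) (G : SimpleGraph V) {j : ι} {y : V} (hy : y ∈ C j) (x : V) :
    (adjM G * switchMatrix C D) x y =
      2 / ((C j).card : ℚ) * nbrCount G x (C j) - adjM G x y := by
  rw [mul_switchMatrix_apply hC, adjM_transpose, switchMatrix_mul_apply_of_mem_cell hC hCD _ hy,
    sum_adjM_eq_nbrCount, adjM_comm]

lemma switchMatrix_conj_adjM_apply_of_mem_D_of_mem_cell
    (hC : Pairwise fun i j => Disjoint (C i) (C j)) (hCD : ∀ i, Disjoint (C i) D)
    {G : SimpleGraph V} (hhalf : GMhalf G C D) {j : ι} {x y : V} (hx : x ∈ D) (hy : y ∈ C j) :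
    (switchMatrix C D * adjM G * switchMatrix C D) x y = adjM (GMswitch G C D) x y := by
  have hxy : x ≠ y := by rintro rfl; exact Finset.disjoint_left.mp (hCD j) hy hx
  have hcard : (C j).card ≠ 0 := Finset.card_ne_zero_of_mem hy
  have hswitch := isGMSwitchedPair_iff_of_mem_D_of_mem_cell hC hCD G hx hy
  rw [Matrix.mul_assoc, switchMatrix_mul_apply_of_mem_D hCD _ hx,
    adjM_mul_switchMatrix_apply_of_mem_cell hC hCD G hy]
  rcases hhalf x hx j with hnone | hhalf | hall
  · rw [adjM_GMswitch_of_not_isGMSwitchedPair (mt hswitch.mp (by omega)),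
      adjM_eq_zero_of_nbrCount_eq_zero hnone hy, hnone]
    simp
  · rw [adjM_GMswitch_of_isGMSwitchedPair hxy (hswitch.mpr hhalf)]
    have hhalf' : 2 * (nbrCount G x (C j) : ℚ) = (C j).card := by exact_mod_cast hhalf
    field_simp
    linear_combination hhalf'
  · rw [adjM_GMswitch_of_not_isGMSwitchedPair (mt hswitch.mp (by omega)),
      adjM_eq_one_of_nbrCount_eq_card hall hy, hall]
    field_simp
    norm_num

lemma switchMatrix_conj_adjM_apply_of_mem_cell_of_mem_cell
    (hC : Pairwise fun i j => Disjoint (C i) (C j)) (hCD : ∀ i, Disjoint (C i) D)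
    {G : SimpleGraph V} (hEq : IsEquitableOn G C) {i j : ι} {x y : V} (hx : x ∈ C i)
    (hy : y ∈ C j) :
    (switchMatrix C D * adjM G * switchMatrix C D) x y = adjM G x y := by
  have hi : ((C i).card : ℚ) ≠ 0 := Nat.cast_ne_zero.mpr (Finset.card_ne_zero_of_mem hx)
  have hj : ((C j).card : ℚ) ≠ 0 := Nat.cast_ne_zero.mpr (Finset.card_ne_zero_of_mem hy)
  have hconst : ∀ z ∈ C i, (nbrCount G z (C j) : ℚ) = nbrCount G x (C j) :=
    fun z hz => by exact_mod_cast hEq i j z hz x hx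
  have hedges : ((C j).card : ℚ) * nbrCount G y (C i) = (C i).card * nbrCount G x (C j) := by
    exact_mod_cast card_mul_nbrCount_comm hEq hx hy
  rw [Matrix.mul_assoc, switchMatrix_mul_apply_of_mem_cell hC hCD _ hx]
  simp only [adjM_mul_switchMatrix_apply_of_mem_cell hC hCD G hy]
  rw [Finset.sum_sub_distrib, sum_adjM_eq_nbrCount, Finset.sum_congr rfl fun z hz => by
    rw [hconst z hz], Finset.sum_const, nsmul_eq_mul]
  field_simp
  linear_combination (-2) * hedges

end GodsilMcKay

theorem adjM_GMswitch_eq_conj_general {V : Type*} [Fintype V]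
    (G : SimpleGraph V) {t : ℕ} (C : Fin t → Finset V) (D : Finset V)
    (hGM : IsGMPartition G C D) :
    adjM (GMswitch G C D) = switchMatrix C D * adjM G * switchMatrix C D := by
  obtain ⟨⟨-, -, hC, hCD, hcover⟩, hEq, hhalf⟩ := hGM
  ext x y
  rcases hcover x with hx | ⟨i, hx⟩ <;> rcases hcover y with hy | ⟨j, hy⟩
  · rw [switchMatrix_conj_apply_of_mem_D hC hCD _ hx hy,
      adjM_GMswitch_of_not_isGMSwitchedPair
        (not_isGMSwitchedPair_of_mem_D_iff hCD G (iff_of_true hx hy))]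
  · exact (switchMatrix_conj_adjM_apply_of_mem_D_of_mem_cell hC hCD hhalf hx hy).symm
  · rw [adjM_comm, ← adjM_transpose G, ← switchMatrix_conj_transpose hC, transpose_apply]
    exact (switchMatrix_conj_adjM_apply_of_mem_D_of_mem_cell hC hCD hhalf hy hx).symm
  · have hxD : x ∉ D := Finset.disjoint_left.mp (hCD i) hx
    have hyD : y ∉ D := Finset.disjoint_left.mp (hCD j) hy
    rw [switchMatrix_conj_adjM_apply_of_mem_cell_of_mem_cell hC hCD hEq hx hy,
      adjM_GMswitch_of_not_isGMSwitchedPair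
        (not_isGMSwitchedPair_of_mem_D_iff hCD G (iff_of_false hxD hyD))]

/-- `A(sw_π Γ) = Q A(Γ) Q`. -/
theorem adjM_GMswitch_eq_conj {V : Type*} [Fintype V] [DecidableEq V]
    (G : SimpleGraph V) {t : ℕ} (C : Fin t → Finset V) (D : Finset V)
    (hGM : IsGMPartition G C D) :
    adjM (GMswitch G C D) = switchMatrix C D * adjM G * switchMatrix C D :=
  adjM_GMswitch_eq_conj_general G C D hGM
end

section
/- Let Γ be a finite simple graph with a Godsil–McKay partition π = {C₁, …, C_t, D}. Let BD(Γ) denote the bipartite double of Γ, i.e., the Kronecker product Γ × K₂ (adjacency matrix A(Γ) ⊗ A(K₂)), and let Π = {C_i × {w} : i ∈ [t], w ∈ V(K₂)} ∪ {D × V(K₂)}. Then Π is a Godsil–McKay partition of BD(Γ) with Godsil–McKay cell D × V(K₂), and the bipartite double of sw_π Γ is isomorphic to sw_Π (BD(Γ)). -/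
/-!
In the bipartite double a vertex `(x, a)` has no neighbour in its own layer `C i × {a}` and, in
the other layer, exactly the copies of the neighbours of `x`. So its neighbour counts in the
cells `C i × {w}` are `0` or those of `x` in `C i`, which gives the Godsil–McKay conditions and
shows that `(x, a)` is switched with `C i × {w}` exactly when `a ≠ w` and `x` is switched with
`C i`. Switching thus commutes with doubling: the two graphs are in fact equal.
-/

open Classical Matrix Kronecker

/-- The bipartite double of `G`, i.e. the Kronecker product `G × K₂`, whose
adjacency matrix is `A(G) ⊗ A(K₂)`. -/
def bipartiteDouble {V : Type*} (G : SimpleGraph V) : SimpleGraph (V × Fin 2) where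
  Adj p q := G.Adj p.1 q.1 ∧ p.2 ≠ q.2
  symm := by constructor; rintro p q ⟨h1, h2⟩; exact ⟨h1.symm, h2.symm⟩
  loopless := by constructor; rintro p ⟨h1, -⟩; exact G.loopless.irrefl _ h1


lemma nbrCount_bipartiteDouble {V : Type*} (G : SimpleGraph V) (x : V) (a : Fin 2)
    (c : Finset V) (w : Fin 2) :
    nbrCount (bipartiteDouble G) (x, a) (c ×ˢ {w}) = if a = w then 0 else nbrCount G x c := by
  split_ifs with haw <;> simp [nbrCount, bipartiteDouble, Finset.filter_map, haw]

section Layers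

variable {V ι W : Type*} (C : ι → Finset V) (D : Finset V)

theorem IsPartitionWithCell.prod [Fintype W] [Nonempty W] (h : IsPartitionWithCell C D) :
    IsPartitionWithCell (fun c : ι × W => C c.1 ×ˢ {c.2}) (D ×ˢ Finset.univ) := by
  obtain ⟨hC, hD, hCC, hCD, hcover⟩ := h
  refine ⟨fun c => (hC c.1).product (Finset.singleton_nonempty _),
    hD.product Finset.univ_nonempty, ?_, fun c => ?_, fun ⟨x, w⟩ => ?_⟩
  · rintro ⟨i, w⟩ ⟨j, u⟩ hne
    by_cases hij : i = j
    · subst hij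
      have hwu : w ≠ u := fun h => hne (h ▸ rfl)
      exact Finset.disjoint_product.mpr (Or.inr (Finset.disjoint_singleton.mpr hwu))
    · exact Finset.disjoint_product.mpr (Or.inl (hCC hij))
  · exact Finset.disjoint_product.mpr (Or.inl (hCD c.1))
  · rcases hcover x with hx | ⟨i, hx⟩
    · exact Or.inl (by simp [hx])
    · exact Or.inr ⟨(i, w), by simp [hx]⟩

end Layers

def GMswitchRel {V ι : Type*} (G : SimpleGraph V) (C : ι → Finset V) (D : Finset V)
    (x y : V) : Prop :=
  ∃ i, (x ∈ D ∧ y ∈ C i ∧ 2 * nbrCount G x (C i) = (C i).card) ∨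
    (y ∈ D ∧ x ∈ C i ∧ 2 * nbrCount G y (C i) = (C i).card)

section BipartiteDouble

variable {V ι : Type*} {G : SimpleGraph V} {C : ι → Finset V} {D : Finset V}

theorem bipartiteDouble_adj {p q : V × Fin 2} :
    (bipartiteDouble G).Adj p q ↔ G.Adj p.1 q.1 ∧ p.2 ≠ q.2 :=
  Iff.rfl

theorem IsEquitableOn.bipartiteDouble (h : IsEquitableOn G C) :
    IsEquitableOn (bipartiteDouble G) (fun c : ι × Fin 2 => C c.1 ×ˢ {c.2}) := by
  rintro ⟨i, w⟩ ⟨j, u⟩ ⟨x, a⟩ hx ⟨y, b⟩ hy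
  simp only [Finset.mem_product, Finset.mem_singleton] at hx hy
  obtain ⟨hx, rfl⟩ := hx
  obtain ⟨hy, rfl⟩ := hy
  simp only [nbrCount_bipartiteDouble, h i j x hx y hy]

theorem GMhalf.bipartiteDouble (h : GMhalf G C D) :
    GMhalf (bipartiteDouble G) (fun c : ι × Fin 2 => C c.1 ×ˢ {c.2}) (D ×ˢ Finset.univ) := by
  rintro ⟨x, a⟩ hx ⟨i, w⟩
  simp only [Finset.mem_product, Finset.mem_univ, and_true] at hx
  rw [nbrCount_bipartiteDouble, Finset.card_product, Finset.card_singleton, mul_one]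
  split_ifs
  · exact Or.inl rfl
  · exact h x hx i

theorem IsGMPartition.bipartiteDouble (h : IsGMPartition G C D) :
    IsGMPartition (bipartiteDouble G) (fun c : ι × Fin 2 => C c.1 ×ˢ {c.2})
      (D ×ˢ Finset.univ) :=
  ⟨h.1.prod, h.2.1.bipartiteDouble, h.2.2.bipartiteDouble⟩

theorem GMswitch_adj {x y : V} :
    (GMswitch G C D).Adj x y ↔ x ≠ y ∧ Xor (G.Adj x y) (GMswitchRel G C D x y) :=
  Iff.rfl

theorem GMswitchRel.ne (hCD : ∀ i, Disjoint (C i) D) {x y : V} (h : GMswitchRel G C D x y) :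
    x ≠ y := by
  rintro rfl
  obtain ⟨i, ⟨hx, hx', -⟩ | ⟨hx, hx', -⟩⟩ := h <;>
    exact Finset.disjoint_left.mp (hCD i) hx' hx

theorem two_mul_nbrCount_bipartiteDouble_eq_card_iff {c : Finset V} (hc : c.Nonempty)
    (x : V) (a w : Fin 2) :
    2 * nbrCount (bipartiteDouble G) (x, a) (c ×ˢ {w}) = (c ×ˢ {w}).card ↔
      a ≠ w ∧ 2 * nbrCount G x c = c.card := by
  rw [nbrCount_bipartiteDouble, Finset.card_product, Finset.card_singleton, mul_one]
  split_ifs with haw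
  · simpa [haw] using hc.card_pos.ne
  · simp [haw]

theorem GMswitchRel_bipartiteDouble_iff (hC : ∀ i, (C i).Nonempty) (x y : V) (a b : Fin 2) :
    GMswitchRel (bipartiteDouble G) (fun c : ι × Fin 2 => C c.1 ×ˢ {c.2}) (D ×ˢ Finset.univ)
        (x, a) (y, b) ↔
      a ≠ b ∧ GMswitchRel G C D x y := by
  simp only [GMswitchRel, two_mul_nbrCount_bipartiteDouble_eq_card_iff (hC _),
    Finset.mem_product, Finset.mem_singleton, Finset.mem_univ, and_true, Prod.exists]
  constructor
  · rintro ⟨i, w, ⟨hx, ⟨hy, rfl⟩, hab, hhalf⟩ | ⟨hy, ⟨hx, rfl⟩, hba, hhalf⟩⟩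
    · exact ⟨hab, i, Or.inl ⟨hx, hy, hhalf⟩⟩
    · exact ⟨hba.symm, i, Or.inr ⟨hy, hx, hhalf⟩⟩
  · rintro ⟨hab, i, ⟨hx, hy, hhalf⟩ | ⟨hy, hx, hhalf⟩⟩
    · exact ⟨i, b, Or.inl ⟨hx, ⟨hy, rfl⟩, hab, hhalf⟩⟩
    · exact ⟨i, a, Or.inr ⟨hy, ⟨hx, rfl⟩, hab.symm, hhalf⟩⟩

theorem bipartiteDouble_GMswitch (hC : ∀ i, (C i).Nonempty) (hCD : ∀ i, Disjoint (C i) D) :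
    bipartiteDouble (GMswitch G C D) =
      GMswitch (bipartiteDouble G) (fun c : ι × Fin 2 => C c.1 ×ˢ {c.2}) (D ×ˢ Finset.univ) := by
  ext ⟨x, a⟩ ⟨y, b⟩
  simp only [bipartiteDouble_adj, GMswitch_adj, GMswitchRel_bipartiteDouble_iff hC]
  by_cases hab : a = b
  · simp [hab]
  · simp only [hab, ne_eq, not_false_eq_true, and_true, true_and, Prod.mk.injEq, and_false]
    refine and_iff_right_of_imp fun h => ?_
    rcases h with ⟨hadj, -⟩ | ⟨hrel, -⟩
    · exact hadj.ne
    · exact hrel.ne hCD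

end BipartiteDouble

theorem bipartiteDouble_switch_compat_general {V : Type*}
    (G : SimpleGraph V) {t : ℕ} (C : Fin t → Finset V) (D : Finset V)
    (hGM : IsGMPartition G C D) :
    IsGMPartition (bipartiteDouble G)
        (fun c : Fin t × Fin 2 => C c.1 ×ˢ ({c.2} : Finset (Fin 2)))
        (D ×ˢ (Finset.univ : Finset (Fin 2)))
    ∧ Nonempty (bipartiteDouble (GMswitch G C D)
        ≃g GMswitch (bipartiteDouble G)
            (fun c : Fin t × Fin 2 => C c.1 ×ˢ ({c.2} : Finset (Fin 2)))
            (D ×ˢ (Finset.univ : Finset (Fin 2)))) := by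
  refine ⟨hGM.bipartiteDouble, ?_⟩
  obtain ⟨⟨hC, -, -, hCD, -⟩, -⟩ := hGM
  rw [bipartiteDouble_GMswitch hC hCD]
  exact ⟨SimpleGraph.Iso.refl⟩

/-- the induced partition is a Godsil–McKay partition of the
bipartite double, and the bipartite double of `sw_π Γ` is isomorphic to the
switch of the bipartite double of `Γ`. -/
theorem bipartiteDouble_switch_compat {V : Type*} [Fintype V] [DecidableEq V]
    (G : SimpleGraph V) {t : ℕ} (C : Fin t → Finset V) (D : Finset V)
    (hGM : IsGMPartition G C D) :
    IsGMPartition (bipartiteDouble G)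
        (fun c : Fin t × Fin 2 => C c.1 ×ˢ ({c.2} : Finset (Fin 2)))
        (D ×ˢ (Finset.univ : Finset (Fin 2)))
    ∧ Nonempty (bipartiteDouble (GMswitch G C D)
        ≃g GMswitch (bipartiteDouble G)
            (fun c : Fin t × Fin 2 => C c.1 ×ˢ ({c.2} : Finset (Fin 2)))
            (D ×ˢ (Finset.univ : Finset (Fin 2)))) :=
  bipartiteDouble_switch_compat_general G C D hGM
end
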